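/- No bad length-three path exists for the projected matching: let I be an SMTI-1TM instance, I' its translated SMI instance, M' a stable matching of I', M the projection of M', and N any (weakly) stable matching of I. Then there do not exist men m_i, m_k and women w_j, w_ℓ such that (m_i,w_j) ∈ N, (m_k,w_ℓ) ∈ N, (m_k,w_j) ∈ M, m_i is single in M, and w_ℓ is single in M. -/

import Mathlib

/-- An instance of the stable marriage problem with ties and incomplete lists (SMTI),
with men of type `α` and women of type `β`.  Each person's preference list is
represented by a rank function: `mpref m w = none` means woman `w` is unacceptable
to man `m`, and `mpref m w = some r` means `w` is acceptable with rank `r`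
(smaller rank = more preferred; equal ranks = a tie).  This encodes exactly a
total preorder on the set of acceptable partners. -/
structure SMInst (α β : Type) where
  mpref : α → β → Option ℕ
  wpref : β → α → Option ℕ

namespace SMInst

variable {α β : Type}

/-- Woman `w` is acceptable to man `m`. -/
def mAcc (I : SMInst α β) (m : α) (w : β) : Prop := (I.mpref m w).isSome

/-- Man `m` is acceptable to woman `w`. -/
def wAcc (I : SMInst α β) (w : β) (m : α) : Prop := (I.wpref w m).isSome

/-- Man `m` strictly prefers woman `w` to woman `w'`. -/
def mPref (I : SMInst α β) (m : α) (w w' : β) : Prop :=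
  ∃ r r', I.mpref m w = some r ∧ I.mpref m w' = some r' ∧ r < r'

/-- Woman `w` strictly prefers man `m` to man `m'`. -/
def wPref (I : SMInst α β) (w : β) (m m' : α) : Prop :=
  ∃ r r', I.wpref w m = some r ∧ I.wpref w m' = some r' ∧ r < r'

/-- `M` is a matching of `I`: all pairs mutually acceptable and no person in two pairs. -/
def IsMatching (I : SMInst α β) (M : Finset (α × β)) : Prop :=
  (∀ p ∈ M, I.mAcc p.1 p.2 ∧ I.wAcc p.2 p.1) ∧
  (∀ p ∈ M, ∀ q ∈ M, p.1 = q.1 → p = q) ∧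
  (∀ p ∈ M, ∀ q ∈ M, p.2 = q.2 → p = q)

/-- Man `m` is single (unmatched) in `M`. -/
def mSingle (M : Finset (α × β)) (m : α) : Prop := ∀ w, (m, w) ∉ M

/-- Woman `w` is single (unmatched) in `M`. -/
def wSingle (M : Finset (α × β)) (w : β) : Prop := ∀ m, (m, w) ∉ M

/-- `(m, w)` blocks `M` in instance `I`. -/
def Blocks (I : SMInst α β) (M : Finset (α × β)) (m : α) (w : β) : Prop :=
  I.mAcc m w ∧ I.wAcc w m ∧
  (mSingle M m ∨ ∃ w', (m, w') ∈ M ∧ I.mPref m w w') ∧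
  (wSingle M w ∨ ∃ m', (m', w) ∈ M ∧ I.wPref w m m')

/-- `M` is a (weakly) stable matching of `I`. -/
def IsStable (I : SMInst α β) (M : Finset (α × β)) : Prop :=
  I.IsMatching M ∧ ∀ m w, ¬ I.Blocks M m w

/-- Man `m` prefers matching `M'` to matching `M`, with respect to his list in `I`:
he is matched in `M'` to an acceptable partner, and he is either single in `M`
or strictly prefers his `M'`-partner to his `M`-partner. -/
def mPrefMatching (I : SMInst α β) (m : α) (M' M : Finset (α × β)) : Prop :=
  ∃ w, (m, w) ∈ M' ∧ I.mAcc m w ∧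
    (mSingle M m ∨ ∃ w', (m, w') ∈ M ∧ I.mPref m w w')

/-- Woman `w` prefers matching `M'` to matching `M`, with respect to her list in `I`. -/
def wPrefMatching (I : SMInst α β) (w : β) (M' M : Finset (α × β)) : Prop :=
  ∃ m, (m, w) ∈ M' ∧ I.wAcc w m ∧
    (wSingle M w ∨ ∃ m', (m', w) ∈ M ∧ I.wPref w m m')

/-- `I` and `I'` differ only in man `m`'s preference list. -/
def mDiffOnly (I I' : SMInst α β) (m : α) : Prop :=
  I.wpref = I'.wpref ∧ ∀ m', m' ≠ m → I.mpref m' = I'.mpref m'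

/-- `I` and `I'` differ only in woman `w`'s preference list. -/
def wDiffOnly (I I' : SMInst α β) (w : β) : Prop :=
  I.mpref = I'.mpref ∧ ∀ w', w' ≠ w → I.wpref w' = I'.wpref w'

/-- Men's lists contain no ties. -/
def MStrict (I : SMInst α β) : Prop :=
  ∀ m w w', I.mpref m w = I.mpref m w' → I.mAcc m w → w = w'

/-- Women's lists contain no ties. -/
def WStrict (I : SMInst α β) : Prop :=
  ∀ w m m', I.wpref w m = I.wpref w m' → I.wAcc w m → m = m'

/-- `I` is an SMI instance: no ties at all (all lists strictly ordered). -/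
def NoTies (I : SMInst α β) : Prop := I.MStrict ∧ I.WStrict

/-- `I` is an SMTI-1TM instance: ties may occur only in men's lists,
i.e. women's lists are strictly ordered. -/
def OneTM (I : SMInst α β) : Prop := I.WStrict

/-- `I'` is obtained from `I` by breaking ties: same acceptable sets, and every
strict preference of `I` is preserved in `I'` (so each person's list in `I'` is a
linear extension of the corresponding total preorder in `I`). -/
def Refines (I I' : SMInst α β) : Prop :=
  (∀ m w, I.mAcc m w ↔ I'.mAcc m w) ∧
  (∀ w m, I.wAcc w m ↔ I'.wAcc w m) ∧
  (∀ m w w', I.mPref m w w' → I'.mPref m w w') ∧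
  (∀ w m m', I.wPref w m m' → I'.wPref w m m')

end SMInst

namespace SMInst

/-- The translation of an SMTI-1TM instance `I` (with men/women indexed by `Fin n`)
into an SMI instance `I'`.  Men of `I'`: `Sum.inl i` is `a_i`, `Sum.inr j` is `b_j`.
Women of `I'`: `Sum.inl j` is `s_j`, `Sum.inr j` is `t_j`.
The strict list of `a_i` replaces each tie `(w_{j_1} … w_{j_k})` (indices increasing)
of `m_i`'s list by the strict segment `t_{j_1} … t_{j_k} s_{j_1} … s_{j_k}`;
`b_j`'s list is `s_j t_j`; `s_j`'s list is `Q(w_j)` followed by `b_j`; and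
`t_j`'s list is `b_j` followed by `Q(w_j)`, where `Q(w_j)` is `w_j`'s list with
each `m_i` replaced by `a_i`. -/
def translate {n : ℕ} (I : SMInst (Fin n) (Fin n)) :
    SMInst (Fin n ⊕ Fin n) (Fin n ⊕ Fin n) where
  mpref := fun a w =>
    match a, w with
    | Sum.inl i, Sum.inl j =>
        (I.mpref i j).map fun r =>
          2 * n * r + n +
            (Finset.univ.filter fun j' : Fin n => I.mpref i j' = some r ∧ j' < j).card
    | Sum.inl i, Sum.inr j =>
        (I.mpref i j).map fun r =>
          2 * n * r +
            (Finset.univ.filter fun j' : Fin n => I.mpref i j' = some r ∧ j' < j).card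
    | Sum.inr i, Sum.inl j => if j = i then some 0 else none
    | Sum.inr i, Sum.inr j => if j = i then some 1 else none
  wpref := fun w a =>
    match w, a with
    | Sum.inl j, Sum.inl i => I.wpref j i
    | Sum.inl j, Sum.inr i =>
        if i = j then some ((Finset.univ.sup fun i' : Fin n => (I.wpref j i').getD 0) + 1)
        else none
    | Sum.inr j, Sum.inl i => (I.wpref j i).map (· + 1)
    | Sum.inr j, Sum.inr i => if i = j then some 0 else none

/-- The projection of a matching `M'` of the translated instance back to the
original instance: `M = {(m_i, w_j) : (a_i, s_j) ∈ M' ∨ (a_i, t_j) ∈ M'}`. -/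
def projectM {n : ℕ} (M' : Finset ((Fin n ⊕ Fin n) × (Fin n ⊕ Fin n))) :
    Finset (Fin n × Fin n) :=
  Finset.univ.filter fun p =>
    (Sum.inl p.1, Sum.inl p.2) ∈ M' ∨ (Sum.inl p.1, Sum.inr p.2) ∈ M'

end SMInst

/-! A stable matching of the translated instance never leaves a man `b_j` single, since `t_j`
ranks him first.  Hence if `m_k` is matched in `M` to `w_j` and `m_i` is single, `a_k` holds
`s_j` rather than `t_j` (otherwise `s_j` sits with `b_j` and `a_i` blocks with her), and since
`a_i` is single, `w_j` strictly prefers `m_k` to `m_i`.  If `w_ℓ` is single in `M`, then `b_ℓ`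
holds `s_ℓ`, so `t_ℓ` is single; as `a_k` ranks `t_ℓ` above `s_j` unless `m_k` strictly
prefers `w_j` to `w_ℓ`, that strict preference follows.  So `(m_k, w_j)` blocks `N`. -/

namespace SMInst

section General

variable {α β : Type} {I : SMInst α β} {M : Finset (α × β)} {m m' : α} {w w' : β}

theorem IsMatching.mAcc_of_mem (hM : I.IsMatching M) (h : (m, w) ∈ M) : I.mAcc m w :=
  (hM.1 _ h).1

theorem IsMatching.wAcc_of_mem (hM : I.IsMatching M) (h : (m, w) ∈ M) : I.wAcc w m :=
  (hM.1 _ h).2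

theorem IsMatching.snd_eq_of_mem (hM : I.IsMatching M) (h : (m, w) ∈ M) (h' : (m, w') ∈ M) :
    w = w' :=
  congrArg Prod.snd (hM.2.1 _ h _ h' rfl)

theorem IsMatching.fst_eq_of_mem (hM : I.IsMatching M) (h : (m, w) ∈ M) (h' : (m', w) ∈ M) :
    m = m' :=
  congrArg Prod.fst (hM.2.2 _ h _ h' rfl)

theorem IsStable.not_wPref_of_mSingle (hM : I.IsStable M) (hm : mSingle M m)
    (hmw : I.mAcc m w) (hwm : I.wAcc w m) (hm' : (m', w) ∈ M) : ¬ I.wPref w m m' :=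
  fun h => hM.2 m w ⟨hmw, hwm, Or.inl hm, Or.inr ⟨m', hm', h⟩⟩

theorem IsStable.not_mPref_of_wSingle (hM : I.IsStable M) (hw : wSingle M w)
    (hmw : I.mAcc m w) (hwm : I.wAcc w m) (hw' : (m, w') ∈ M) : ¬ I.mPref m w w' :=
  fun h => hM.2 m w ⟨hmw, hwm, Or.inr ⟨w', hw', h⟩, Or.inl hw⟩

theorem IsStable.exists_mem_not_wPref_of_mSingle (hM : I.IsStable M) (hm : mSingle M m)
    (hmw : I.mAcc m w) (hwm : I.wAcc w m) : ∃ m', (m', w) ∈ M ∧ ¬ I.wPref w m m' := by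
  by_contra! h
  refine hM.2 m w ⟨hmw, hwm, Or.inl hm, ?_⟩
  by_cases hw : wSingle M w
  · exact Or.inl hw
  · obtain ⟨m', hm'⟩ : ∃ m', (m', w) ∈ M := by simpa [wSingle] using hw
    exact Or.inr ⟨m', hm', h m' hm'⟩

theorem IsStable.exists_mem_not_mPref_of_wSingle (hM : I.IsStable M) (hw : wSingle M w)
    (hmw : I.mAcc m w) (hwm : I.wAcc w m) : ∃ w', (m, w') ∈ M ∧ ¬ I.mPref m w w' := by
  by_contra! h
  refine hM.2 m w ⟨hmw, hwm, ?_, Or.inl hw⟩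
  by_cases hm : mSingle M m
  · exact Or.inl hm
  · obtain ⟨w', hw'⟩ : ∃ w', (m, w') ∈ M := by simpa [mSingle] using hm
    exact Or.inr ⟨w', hw', h w' hw'⟩

theorem WStrict.wPref_of_not_wPref (hI : I.WStrict) (hm : I.wAcc w m) (hm' : I.wAcc w m')
    (hne : m ≠ m') (h : ¬ I.wPref w m' m) : I.wPref w m m' := by
  obtain ⟨r, hr⟩ := Option.isSome_iff_exists.mp hm
  obtain ⟨r', hr'⟩ := Option.isSome_iff_exists.mp hm'
  refine ⟨r, r', hr, hr', lt_of_le_of_ne (not_lt.mp fun hlt => h ⟨r', r, hr', hr, hlt⟩) ?_⟩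
  rintro rfl
  exact hne (hI w m m' (hr.trans hr'.symm) hm)

end General

section Translate

open Sum

variable {n : ℕ} (I : SMInst (Fin n) (Fin n)) (i j l x : Fin n)

@[simp] theorem translate_mpref_inl_inl : (translate I).mpref (inl i) (inl j) =
    (I.mpref i j).map fun r => 2 * n * r + n +
      (Finset.univ.filter fun j' : Fin n => I.mpref i j' = some r ∧ j' < j).card := rfl

@[simp] theorem translate_mpref_inl_inr : (translate I).mpref (inl i) (inr j) =
    (I.mpref i j).map fun r => 2 * n * r +
      (Finset.univ.filter fun j' : Fin n => I.mpref i j' = some r ∧ j' < j).card := rfl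

@[simp] theorem translate_mpref_inr_inl :
    (translate I).mpref (inr x) (inl j) = if j = x then some 0 else none := rfl

@[simp] theorem translate_mpref_inr_inr :
    (translate I).mpref (inr x) (inr j) = if j = x then some 1 else none := rfl

@[simp] theorem translate_wpref_inl_inr : (translate I).wpref (inl j) (inr x) =
    if x = j then some ((Finset.univ.sup fun i' : Fin n => (I.wpref j i').getD 0) + 1)
    else none := rfl

@[simp] theorem translate_wpref_inr_inl :
    (translate I).wpref (inr j) (inl i) = (I.wpref j i).map (· + 1) := rfl

@[simp] theorem translate_wpref_inr_inr :
    (translate I).wpref (inr j) (inr x) = if x = j then some 0 else none := rfl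

@[simp] theorem translate_mAcc_inl_inl : (translate I).mAcc (inl i) (inl j) ↔ I.mAcc i j := by
  simp [mAcc]

@[simp] theorem translate_mAcc_inl_inr : (translate I).mAcc (inl i) (inr j) ↔ I.mAcc i j := by
  simp [mAcc]

@[simp] theorem translate_mAcc_inr_inl : (translate I).mAcc (inr x) (inl j) ↔ j = x := by
  simp [mAcc]

@[simp] theorem translate_mAcc_inr_inr : (translate I).mAcc (inr x) (inr j) ↔ j = x := by
  simp [mAcc]

@[simp] theorem translate_wAcc_inl_inl : (translate I).wAcc (inl j) (inl i) ↔ I.wAcc j i :=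
  Iff.rfl

@[simp] theorem translate_wAcc_inl_inr : (translate I).wAcc (inl j) (inr x) ↔ x = j := by
  simp [wAcc]

@[simp] theorem translate_wAcc_inr_inl : (translate I).wAcc (inr j) (inl i) ↔ I.wAcc j i := by
  simp [wAcc]

@[simp] theorem translate_wAcc_inr_inr : (translate I).wAcc (inr j) (inr x) ↔ x = j := by
  simp [wAcc]

variable {I i j l}

theorem translate_wPref_inl_inl_inr (h : I.wAcc j i) :
    (translate I).wPref (inl j) (inl i) (inr j) := by
  obtain ⟨r, hr⟩ := Option.isSome_iff_exists.mp h
  have hle : r ≤ Finset.univ.sup fun i' : Fin n => (I.wpref j i').getD 0 := by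
    simpa [hr] using Finset.le_sup (f := fun i' : Fin n => (I.wpref j i').getD 0)
      (Finset.mem_univ i)
  exact ⟨r, _, hr, by simp, Nat.lt_succ_of_le hle⟩

theorem translate_wPref_inr_inr_inl (h : I.wAcc j i) :
    (translate I).wPref (inr j) (inr j) (inl i) := by
  obtain ⟨r, hr⟩ := Option.isSome_iff_exists.mp h
  exact ⟨0, r + 1, by simp, by simp [hr], r.succ_pos⟩

theorem translate_mPref_inr_inl_inr : (translate I).mPref (inr j) (inl j) (inr j) :=
  ⟨0, 1, by simp, by simp, one_pos⟩

theorem card_filter_and_lt_lt (p : Fin n → Prop) [DecidablePred p] :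
    (Finset.univ.filter fun j' => p j' ∧ j' < j).card < n := by
  simpa using Finset.card_lt_univ_of_notMem (x := j) (by simp)

theorem translate_mPref_inl_inr_inl (hl : I.mAcc i l) (hj : I.mAcc i j)
    (h : ¬ I.mPref i j l) : (translate I).mPref (inl i) (inr l) (inl j) := by
  obtain ⟨rl, hrl⟩ := Option.isSome_iff_exists.mp hl
  obtain ⟨rj, hrj⟩ := Option.isSome_iff_exists.mp hj
  have hle : rl ≤ rj := not_lt.mp fun hlt => h ⟨rj, rl, hrj, hrl, hlt⟩
  refine ⟨_, _, by rw [translate_mpref_inl_inr, hrl]; rfl,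
    by rw [translate_mpref_inl_inl, hrj]; rfl, ?_⟩
  have := card_filter_and_lt_lt (j := l) (fun j' => I.mpref i j' = some rl)
  have := Nat.mul_le_mul_left (2 * n) hle
  -- the rank `2n·rl + c` of `t_l` has `c < n`, so it stays below `2n·rl + n ≤ 2n·rj + n`
  beta_reduce
  omega

end Translate

section TranslateStable

open Sum

variable {n : ℕ} {I : SMInst (Fin n) (Fin n)} {M' : Finset ((Fin n ⊕ Fin n) × (Fin n ⊕ Fin n))}
  {i j k l x : Fin n}

@[simp] theorem mem_projectM :
    (i, j) ∈ projectM M' ↔ (inl i, inl j) ∈ M' ∨ (inl i, inr j) ∈ M' := by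
  simp [projectM]

theorem mSingle_inl_of_mSingle_projectM (h : mSingle (projectM M') i) : mSingle M' (inl i) := by
  rintro (j | j) hj <;> exact h j (by simp [hj])

theorem IsMatching.translate_eq_of_inr_mem (hM' : (translate I).IsMatching M') {w}
    (h : (inr x, w) ∈ M') : w = inl x ∨ w = inr x := by
  have := hM'.mAcc_of_mem h
  rcases w with j | j <;> simp_all

theorem IsMatching.translate_eq_of_mem_inl (hM' : (translate I).IsMatching M') {m}
    (h : (m, inl x) ∈ M') : (∃ i, m = inl i) ∨ m = inr x := by
  have := hM'.wAcc_of_mem h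
  rcases m with i | i <;> simp_all

theorem IsMatching.translate_eq_of_mem_inr (hM' : (translate I).IsMatching M') {m}
    (h : (m, inr x) ∈ M') : (∃ i, m = inl i) ∨ m = inr x := by
  have := hM'.wAcc_of_mem h
  rcases m with i | i <;> simp_all

theorem IsStable.translate_inr_matched (hM' : (translate I).IsStable M') (x : Fin n) :
    (inr x, inl x) ∈ M' ∨ (inr x, inr x) ∈ M' := by
  by_contra! h
  have hb : mSingle M' (inr x) := fun w hw => by
    rcases hM'.1.translate_eq_of_inr_mem hw with rfl | rfl
    exacts [h.1 hw, h.2 hw]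
  obtain ⟨m, hm, hpref⟩ := hM'.exists_mem_not_wPref_of_mSingle hb (w := inr x) (by simp) (by simp)
  rcases hM'.1.translate_eq_of_mem_inr hm with ⟨i, rfl⟩ | rfl
  · exact hpref (translate_wPref_inr_inr_inl ((translate_wAcc_inr_inl ..).mp
      (hM'.1.wAcc_of_mem hm)))
  · exact h.2 hm

theorem IsStable.translate_inl_inl_mem (hM' : (translate I).IsStable M')
    (hk : (k, j) ∈ projectM M') (hi : mSingle M' (inl i)) (hij : I.mAcc i j)
    (hji : I.wAcc j i) : (inl k, inl j) ∈ M' := by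
  refine (mem_projectM.mp hk).resolve_right fun hkt => ?_
  have hbs : (inr j, inl j) ∈ M' := (hM'.translate_inr_matched j).resolve_right fun hbt =>
    inl_ne_inr (hM'.1.fst_eq_of_mem hkt hbt)
  exact hM'.not_wPref_of_mSingle hi (by simpa) (by simpa) hbs (translate_wPref_inl_inl_inr hji)

theorem IsStable.translate_wPref (hM' : (translate I).IsStable M') (hI : I.OneTM)
    (hk : (inl k, inl j) ∈ M') (hi : mSingle M' (inl i)) (hij : I.mAcc i j)
    (hji : I.wAcc j i) : I.wPref j k i :=
  WStrict.wPref_of_not_wPref hI (hM'.1.wAcc_of_mem hk) hji (by rintro rfl; exact hi _ hk)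
    (hM'.not_wPref_of_mSingle hi (by simpa) (by simpa) hk)

theorem IsStable.translate_inr_inl_mem (hM' : (translate I).IsStable M')
    (hl : wSingle (projectM M') l) : (inr l, inl l) ∈ M' := by
  refine (hM'.translate_inr_matched l).resolve_right fun hbt => ?_
  have hs : wSingle M' (inl l) := fun m hm => by
    rcases hM'.1.translate_eq_of_mem_inl hm with ⟨i, rfl⟩ | rfl
    · exact hl i (by simp [hm])
    · exact inl_ne_inr (hM'.1.snd_eq_of_mem hm hbt)
  obtain ⟨w, hw, hpref⟩ :=
    hM'.exists_mem_not_mPref_of_wSingle hs (m := inr l) (by simp) (by simp)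
  rw [hM'.1.snd_eq_of_mem hw hbt] at hpref
  exact hpref translate_mPref_inr_inl_inr

theorem IsStable.translate_wSingle_inr (hM' : (translate I).IsStable M')
    (hl : wSingle (projectM M') l) : wSingle M' (inr l) := fun m hm => by
  rcases hM'.1.translate_eq_of_mem_inr hm with ⟨i, rfl⟩ | rfl
  · exact hl i (by simp [hm])
  · exact inr_ne_inl (hM'.1.snd_eq_of_mem hm (hM'.translate_inr_inl_mem hl))

theorem IsStable.translate_mPref (hM' : (translate I).IsStable M') (hk : (inl k, inl j) ∈ M')
    (hl : wSingle M' (inr l)) (hkl : I.mAcc k l) (hlk : I.wAcc l k) : I.mPref k j l := by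
  by_contra h
  exact hM'.not_mPref_of_wSingle hl (by simpa) (by simpa) hk
    (translate_mPref_inl_inr_inl hkl ((translate_mAcc_inl_inl ..).mp (hM'.1.mAcc_of_mem hk)) h)

end TranslateStable

end SMInst

/-- No bad length-three path exists for the projected matching: if `M` is the
projection of a stable matching `M'` of the translated instance and `N` is any
(weakly) stable matching of `I`, then there do not exist men `m_i, m_k` and women
`w_j, w_ℓ` with `(m_i,w_j) ∈ N`, `(m_k,w_ℓ) ∈ N`, `(m_k,w_j) ∈ M`, `m_i` single in
`M`, and `w_ℓ` single in `M`. -/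
theorem projection_no_bad_path {n : ℕ}
    (I : SMInst (Fin n) (Fin n)) (h1tm : I.OneTM)
    (M' : Finset ((Fin n ⊕ Fin n) × (Fin n ⊕ Fin n)))
    (hM' : (SMInst.translate I).IsStable M')
    (N : Finset (Fin n × Fin n)) (hN : I.IsStable N) :
    ¬ ∃ (mi mk wj wl : Fin n),
        (mi, wj) ∈ N ∧ (mk, wl) ∈ N ∧ (mk, wj) ∈ SMInst.projectM M' ∧
        SMInst.mSingle (SMInst.projectM M') mi ∧
        SMInst.wSingle (SMInst.projectM M') wl := by
  rintro ⟨mi, mk, wj, wl, hij, hkl, hkj, hi, hl⟩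
  have hi' := SMInst.mSingle_inl_of_mSingle_projectM hi
  have hkj' := hM'.translate_inl_inl_mem hkj hi' (hN.1.mAcc_of_mem hij) (hN.1.wAcc_of_mem hij)
  have hmk : I.mPref mk wj wl := hM'.translate_mPref hkj' (hM'.translate_wSingle_inr hl)
    (hN.1.mAcc_of_mem hkl) (hN.1.wAcc_of_mem hkl)
  have hwj : I.wPref wj mk mi :=
    hM'.translate_wPref h1tm hkj' hi' (hN.1.mAcc_of_mem hij) (hN.1.wAcc_of_mem hij)
  exact hN.2 mk wj ⟨(SMInst.translate_mAcc_inl_inl ..).mp (hM'.1.mAcc_of_mem hkj'),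
    hM'.1.wAcc_of_mem hkj', Or.inr ⟨wl, hkl, hmk⟩, Or.inr ⟨mi, hij, hwj⟩⟩
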